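/- Let ω : ℕ → ℝ be a function with ω(r) → ∞ and ω(r) = o(log r) as r → ∞, and for each r let p(r) = (log r + ω(r))/r, assuming 0 ≤ p(r) ≤ 1. Let X be a random edge-subgraph of K_{r,r} drawn from G(K_{r,r}, p(r)). Then the probability that X has some connected component whose number of vertices lies between 2 and r (inclusive) tends to 0 as r → ∞. -/

import Mathlib

set_option maxHeartbeats 1000000

open MeasureTheory Finset


open SimpleGraph

/-- The Bernoulli measure on `Bool` with success probability `p`. -/
noncomputable def bernoulliMeasure (p : ℝ) : MeasureTheory.Measure Bool :=
  ENNReal.ofReal p • MeasureTheory.Measure.dirac true +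
    ENNReal.ofReal (1 - p) • MeasureTheory.Measure.dirac false

/-- The distribution `G(K_{r,r}, p)`: each of the `r * r` potential edges of the complete
bipartite graph is present independently with probability `p`; outcomes are indexed by
functions recording the presence of each potential edge. -/
noncomputable def bipartiteRandomModel (r : ℕ) (p : ℝ) :
    MeasureTheory.Measure (Fin r × Fin r → Bool) :=
  MeasureTheory.Measure.pi fun _ => bernoulliMeasure p

/-- The edge-subgraph of `K_{r,r}` determined by an outcome `ω`. -/
def graphOf {r : ℕ} (ω : Fin r × Fin r → Bool) : SimpleGraph (Fin r ⊕ Fin r) :=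
  SimpleGraph.fromRel (fun x y => ∃ i j, x = Sum.inl i ∧ y = Sum.inr j ∧ ω (i, j) = true)


instance bernoulliMeasure.isFiniteMeasure (p : ℝ) : IsFiniteMeasure (bernoulliMeasure p) := by
  constructor
  simp only [bernoulliMeasure, Measure.add_apply, Measure.smul_apply, measure_univ, smul_eq_mul,
    mul_one]
  exact ENNReal.add_lt_top.2 ⟨ENNReal.ofReal_lt_top, ENNReal.ofReal_lt_top⟩

lemma bern_false (p : ℝ) : bernoulliMeasure p {false} = ENNReal.ofReal (1 - p) := by
  simp [bernoulliMeasure, Measure.dirac_apply]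

lemma bern_univ (p : ℝ) (h0 : 0 ≤ p) (h1 : p ≤ 1) : bernoulliMeasure p Set.univ = 1 := by
  simp only [bernoulliMeasure, Measure.add_apply, Measure.smul_apply, measure_univ, smul_eq_mul,
    mul_one]
  rw [← ENNReal.ofReal_add h0 (by linarith)]
  norm_num

lemma iso_measure (r : ℕ) (p : ℝ) (h0 : 0 ≤ p) (h1 : p ≤ 1) (A B : Finset (Fin r)) :
    bipartiteRandomModel r p
      {ω | ∀ k : Fin r × Fin r, ((k.1 ∈ A ∧ k.2 ∉ B) ∨ (k.1 ∉ A ∧ k.2 ∈ B)) → ω k = false}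
    = ENNReal.ofReal (1 - p) ^ (A.card * (r - B.card) + B.card * (r - A.card)) := by
  classical
  set P : Fin r × Fin r → Prop := fun k => (k.1 ∈ A ∧ k.2 ∉ B) ∨ (k.1 ∉ A ∧ k.2 ∈ B) with hP
  have hset : {ω : Fin r × Fin r → Bool | ∀ k, P k → ω k = false}
      = Set.univ.pi (fun k => if P k then ({false} : Set Bool) else Set.univ) := by
    ext ω
    simp only [Set.mem_pi, Set.mem_univ, Set.mem_setOf_eq, forall_true_left]
    constructor
    · intro h k
      split_ifs with hk
      · exact h k hk
      · trivial
    · intro h k hk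
      have := h k
      rw [if_pos hk] at this
      exact this
  rw [bipartiteRandomModel, hset, Measure.pi_pi]
  have hmeas : ∀ k : Fin r × Fin r,
      bernoulliMeasure p (if P k then ({false} : Set Bool) else Set.univ)
      = if P k then ENNReal.ofReal (1 - p) else 1 := by
    intro k
    split_ifs
    · exact bern_false p
    · exact bern_univ p h0 h1
  simp only [hmeas]
  rw [Finset.prod_ite, Finset.prod_const, Finset.prod_const, one_pow, mul_one]
  congr 1
  have hfil : (univ.filter P) = (A ×ˢ Bᶜ) ∪ (Aᶜ ×ˢ B) := by
    ext k
    simp only [mem_filter, mem_univ, true_and, mem_union, mem_product, mem_compl, hP]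
  have hdisj : Disjoint (A ×ˢ Bᶜ) (Aᶜ ×ˢ B) := by
    rw [Finset.disjoint_left]
    rintro ⟨i, j⟩ hij hij'
    rw [mem_product] at hij hij'
    exact (mem_compl.1 hij'.1) hij.1
  rw [hfil, card_union_of_disjoint hdisj, card_product, card_product, card_compl, card_compl,
    Fintype.card_fin, mul_comm (r - A.card) B.card]

lemma adj_graphOf {r : ℕ} {ω : Fin r × Fin r → Bool} {i j : Fin r} :
    (graphOf ω).Adj (Sum.inl i) (Sum.inr j) ↔ ω (i, j) = true := by
  rw [graphOf, SimpleGraph.fromRel_adj]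
  constructor
  · rintro ⟨-, ⟨i', j', hi, hj, h⟩ | ⟨i', j', hi, hj, h⟩⟩
    · cases hi; cases hj; exact h
    · exact absurd hi (by simp)
  · intro h
    exact ⟨by simp, Or.inl ⟨i, j, rfl, rfl, h⟩⟩

lemma adj_cross {r : ℕ} {ω : Fin r × Fin r → Bool} {x y : Fin r ⊕ Fin r}
    (h : (graphOf ω).Adj x y) :
    (∃ i j, x = Sum.inl i ∧ y = Sum.inr j ∧ ω (i, j) = true) ∨
    (∃ i j, x = Sum.inr j ∧ y = Sum.inl i ∧ ω (i, j) = true) := by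
  rw [graphOf, SimpleGraph.fromRel_adj] at h
  rcases h.2 with ⟨i, j, hi, hj, hh⟩ | ⟨i, j, hi, hj, hh⟩
  · exact Or.inl ⟨i, j, hi, hj, hh⟩
  · exact Or.inr ⟨i, j, hj, hi, hh⟩

lemma event_subset (r : ℕ) :
    {ω : Fin r × Fin r → Bool | ∃ c : (graphOf ω).ConnectedComponent,
      2 ≤ Nat.card c.supp ∧ Nat.card c.supp ≤ r}
    ⊆ ⋃ AB ∈ Finset.filter
        (fun AB : Finset (Fin r) × Finset (Fin r) =>
          AB.1.Nonempty ∧ AB.2.Nonempty ∧ AB.1.card + AB.2.card ≤ r) Finset.univ,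
      {ω : Fin r × Fin r → Bool | ∀ k : Fin r × Fin r,
        ((k.1 ∈ AB.1 ∧ k.2 ∉ AB.2) ∨ (k.1 ∉ AB.1 ∧ k.2 ∈ AB.2)) → ω k = false} := by
  classical
  intro ω hω
  obtain ⟨c, h2, hr⟩ := hω
  set A : Finset (Fin r) := univ.filter (fun i => Sum.inl i ∈ c.supp) with hA
  set B : Finset (Fin r) := univ.filter (fun j => Sum.inr j ∈ c.supp) with hB
  -- membership characterizations
  have hmemA : ∀ i, i ∈ A ↔ Sum.inl i ∈ c.supp := by intro i; simp [hA]
  have hmemB : ∀ j, j ∈ B ↔ Sum.inr j ∈ c.supp := by intro j; simp [hB]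
  -- cardinality
  have hcard : Nat.card c.supp = A.card + B.card := by
    have e : c.supp ≃ {i : Fin r // Sum.inl i ∈ c.supp} ⊕ {j : Fin r // Sum.inr j ∈ c.supp} :=
      { toFun := fun x => match x with
          | ⟨Sum.inl i, h⟩ => Sum.inl ⟨i, h⟩
          | ⟨Sum.inr j, h⟩ => Sum.inr ⟨j, h⟩
        invFun := fun x => match x with
          | Sum.inl ⟨i, h⟩ => ⟨Sum.inl i, h⟩
          | Sum.inr ⟨j, h⟩ => ⟨Sum.inr j, h⟩
        left_inv := by rintro ⟨(i | j), h⟩ <;> rfl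
        right_inv := by rintro (⟨i, h⟩ | ⟨j, h⟩) <;> rfl }
    rw [Nat.card_congr e, Nat.card_sum]
    congr 1
    · rw [Nat.card_eq_fintype_card, Fintype.card_subtype]
    · rw [Nat.card_eq_fintype_card, Fintype.card_subtype]
  -- an edge inside the component
  have hedge : ∃ x y, (graphOf ω).Adj x y ∧ x ∈ c.supp := by
    have h1 : 1 < Nat.card c.supp := h2
    rw [Nat.card_eq_fintype_card] at h1
    obtain ⟨⟨u, hu⟩, ⟨v, hv⟩, huv⟩ := Fintype.exists_pair_of_one_lt_card h1
    have huv' : u ≠ v := fun h => huv (by simpa using h)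
    have hreach : (graphOf ω).Reachable u v := by
      rw [SimpleGraph.ConnectedComponent.mem_supp_iff] at hu hv
      exact SimpleGraph.ConnectedComponent.exact (hu.trans hv.symm)
    obtain ⟨W⟩ := hreach
    cases W with
    | nil => exact absurd rfl huv'
    | cons h _ => exact ⟨u, _, h, hu⟩
  obtain ⟨x, y, hxy, hx⟩ := hedge
  have hy : y ∈ c.supp := by
    rw [SimpleGraph.ConnectedComponent.mem_supp_iff] at hx ⊢
    rw [← hx]
    exact (SimpleGraph.ConnectedComponent.sound hxy.symm.reachable)
  -- nonemptiness
  have hAB : A.Nonempty ∧ B.Nonempty := by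
    rcases adj_cross hxy with ⟨i, j, hxi, hyj, -⟩ | ⟨i, j, hxj, hyi, -⟩
    · subst hxi; subst hyj
      exact ⟨⟨i, (hmemA i).2 hx⟩, ⟨j, (hmemB j).2 hy⟩⟩
    · subst hxj; subst hyi
      exact ⟨⟨i, (hmemA i).2 hy⟩, ⟨j, (hmemB j).2 hx⟩⟩
  -- isolation
  have hiso : ∀ k : Fin r × Fin r,
      ((k.1 ∈ A ∧ k.2 ∉ B) ∨ (k.1 ∉ A ∧ k.2 ∈ B)) → ω k = false := by
    rintro ⟨i, j⟩ hk
    by_contra hne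
    have htrue : ω (i, j) = true := by
      cases hv : ω (i, j)
      · exact absurd hv hne
      · rfl
    have hadj : (graphOf ω).Adj (Sum.inl i) (Sum.inr j) := adj_graphOf.2 htrue
    rcases hk with ⟨hi, hj⟩ | ⟨hi, hj⟩
    · apply hj
      rw [hmemB]
      rw [SimpleGraph.ConnectedComponent.mem_supp_iff] at *
      rw [← (hmemA i).1 hi]
      exact SimpleGraph.ConnectedComponent.sound hadj.symm.reachable
    · apply hi
      rw [hmemA]
      rw [SimpleGraph.ConnectedComponent.mem_supp_iff] at *
      rw [← (hmemB j).1 hj]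
      exact SimpleGraph.ConnectedComponent.sound hadj.reachable
  -- conclude
  rw [Set.mem_iUnion]
  refine ⟨(A, B), ?_⟩
  rw [Set.mem_iUnion]
  refine ⟨?_, hiso⟩
  simp only [Finset.mem_coe, Finset.mem_filter, Finset.mem_univ, true_and]
  exact ⟨hAB.1, hAB.2, by rw [← hcard]; exact hr⟩

lemma pow_self_le (n : ℕ) : (n:ℝ)^n ≤ Real.exp n * n.factorial := by
  induction n with
  | zero => simp
  | succ n ih =>
    rcases Nat.eq_zero_or_pos n with h0 | hpos
    · subst h0
      have h := Real.one_le_exp (by norm_num : (0:ℝ) ≤ 1)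
      simpa using h
    · have hn : (1:ℝ) ≤ (n:ℝ) := by exact_mod_cast hpos
      have hnpos : (0:ℝ) < n := by linarith
      have key : ((n:ℝ)+1)^n ≤ Real.exp 1 * (n:ℝ)^n := by
        have h2 : ((n:ℝ)+1) ≤ (n:ℝ) * Real.exp (1/(n:ℝ)) := by
          have h := Real.add_one_le_exp (1/(n:ℝ))
          have := mul_le_mul_of_nonneg_left h (le_of_lt hnpos)
          calc ((n:ℝ)+1) = (n:ℝ) * (1/(n:ℝ) + 1) := by
                field_simp
                exact add_comm _ _
            _ ≤ (n:ℝ) * Real.exp (1/(n:ℝ)) := this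
        have h3 : ((n:ℝ)+1)^n ≤ ((n:ℝ) * Real.exp (1/(n:ℝ)))^n :=
          pow_le_pow_left₀ (by positivity) h2 n
        have h5 : Real.exp (1/(n:ℝ))^n = Real.exp 1 := by
          rw [← Real.exp_nat_mul]
          congr 1
          field_simp
        calc ((n:ℝ)+1)^n ≤ ((n:ℝ) * Real.exp (1/(n:ℝ)))^n := h3
          _ = (n:ℝ)^n * Real.exp (1/(n:ℝ))^n := mul_pow _ _ n
          _ = Real.exp 1 * (n:ℝ)^n := by rw [h5]; ring
      have hfacpos : (0:ℝ) < n.factorial := by exact_mod_cast n.factorial_pos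
      have hexp1 : (0:ℝ) < Real.exp 1 := Real.exp_pos 1
      rw [Nat.factorial_succ]
      push_cast
      calc ((n:ℝ)+1)^(n+1) = ((n:ℝ)+1) * ((n:ℝ)+1)^n := by rw [pow_succ]; ring
        _ ≤ ((n:ℝ)+1) * (Real.exp 1 * (n:ℝ)^n) := by
            apply mul_le_mul_of_nonneg_left key (by linarith)
        _ ≤ ((n:ℝ)+1) * (Real.exp 1 * (Real.exp n * n.factorial)) := by
            apply mul_le_mul_of_nonneg_left _ (by linarith)
            exact mul_le_mul_of_nonneg_left ih (le_of_lt hexp1)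
        _ = Real.exp ((n:ℝ)+1) * (((n:ℝ)+1) * n.factorial) := by
            rw [Real.exp_add]; ring

lemma choose_le_exp (r c : ℕ) (hc : 1 ≤ c) (hcr : c ≤ r) :
    (r.choose c : ℝ) ≤ Real.exp (c * (1 + Real.log r - Real.log c)) := by
  have hcpos : (0:ℝ) < c := by exact_mod_cast hc
  have hrpos : (0:ℝ) < r := by exact_mod_cast lt_of_lt_of_le (by omega : 0 < c) hcr
  have hfacpos : (0:ℝ) < c.factorial := by exact_mod_cast c.factorial_pos
  have h1 : (r.choose c : ℝ) ≤ (r:ℝ)^c / c.factorial := Nat.choose_le_pow_div c r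
  have hfac : ((c:ℝ))^c ≤ Real.exp c * c.factorial := pow_self_le c
  have hexp : Real.exp ((c:ℝ) * (1 + Real.log r - Real.log c))
      = Real.exp c * (r:ℝ)^c / (c:ℝ)^c := by
    rw [show (c:ℝ) * (1 + Real.log r - Real.log c)
        = (c:ℝ) + (c:ℝ) * Real.log r - (c:ℝ) * Real.log c by ring]
    rw [Real.exp_sub, Real.exp_add]
    rw [show (c:ℝ) * Real.log r = ((c:ℕ):ℝ) * Real.log r by norm_num]
    rw [show (c:ℝ) * Real.log c = ((c:ℕ):ℝ) * Real.log c by norm_num]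
    rw [Real.exp_nat_mul, Real.exp_nat_mul, Real.exp_log hrpos, Real.exp_log hcpos]
  rw [hexp]
  apply h1.trans
  rw [div_le_div_iff₀ hfacpos (by positivity)]
  calc (r:ℝ)^c * (c:ℝ)^c ≤ (r:ℝ)^c * (Real.exp c * c.factorial) := by
        apply mul_le_mul_of_nonneg_left hfac (by positivity)
    _ = Real.exp c * (r:ℝ)^c * c.factorial := by ring

lemma tangent_line (x m : ℝ) (hx : 0 < x) (hm : 0 < m) :
    x * Real.log m + x - m ≤ x * Real.log x := by
  have h1 : Real.log (m/x) ≤ m/x - 1 := Real.log_le_sub_one_of_pos (by positivity)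
  have h2 : Real.log (m/x) = Real.log m - Real.log x := Real.log_div (ne_of_gt hm) (ne_of_gt hx)
  have h3 : x * (Real.log m - Real.log x) ≤ x * (m/x - 1) :=
    mul_le_mul_of_nonneg_left (h2 ▸ h1) (le_of_lt hx)
  have h4 : x * (m/x - 1) = m - x := by field_simp
  nlinarith [h3, h4]

lemma G_nonneg (x y R L w : ℝ) (hx : 1 ≤ x) (hy : 1 ≤ y) (hs : x + y ≤ R)
    (hw : 4 ≤ w) (hL : 11 ≤ L) (hwL : w ≤ L) (hLR : L^3 ≤ R) (hLlog : L = Real.log R) :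
    0 ≤ x*Real.log x + y*Real.log y + (x+y)*w/2 - (x+y) - 2*x*y*(L+w)/R := by
  have hR : (2:ℝ) ≤ R := by linarith
  have hRpos : (0:ℝ) < R := by linarith
  have hs2 : (2:ℝ) ≤ x + y := by linarith
  have hspos : (0:ℝ) < x + y := by linarith
  have hxy4 : 4*(x*y) ≤ (x+y)^2 := by nlinarith [sq_nonneg (x-y)]
  have hLw : 0 ≤ L + w := by linarith
  have hxlog : 0 ≤ x * Real.log x := mul_nonneg (by linarith) (Real.log_nonneg hx)
  have hylog : 0 ≤ y * Real.log y := mul_nonneg (by linarith) (Real.log_nonneg hy)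
  rcases le_or_gt ((x+y)^3) (R^2) with hcase | hcase
  · -- small components
    have hsL : (x+y)*L ≤ R := by
      have hLpos : (0:ℝ) < L := by linarith
      have h1 : ((x+y)*L)^3 ≤ R^3 := by
        calc ((x+y)*L)^3 = (x+y)^3 * L^3 := by ring
          _ ≤ R^2 * R := mul_le_mul hcase hLR (by positivity) (by positivity)
          _ = R^3 := by ring
      exact le_of_pow_le_pow_left₀ (by norm_num) (le_of_lt hRpos) h1
    have hkey : 2*x*y*(L+w)/R ≤ (x+y) := by
      rw [div_le_iff₀ hRpos]
      nlinarith [hxy4, hsL, hLw, hwL, hs2, hRpos, mul_nonneg (le_of_lt hspos) hLw]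
    nlinarith [hxlog, hylog, hkey, hs2, hw]
  · -- large components
    have hlogs : 2*L ≤ 3*Real.log (x+y) := by
      have h1 : Real.log (R^2) ≤ Real.log ((x+y)^3) :=
        Real.log_le_log (by positivity) (le_of_lt hcase)
      rw [Real.log_pow, Real.log_pow] at h1
      push_cast at h1
      linarith [hLlog ▸ h1]
    have hm : (0:ℝ) < (x+y)/2 := by linarith
    have ht1 : x * Real.log ((x+y)/2) + x - (x+y)/2 ≤ x * Real.log x :=
      tangent_line x ((x+y)/2) (by linarith) hm
    have ht2 : y * Real.log ((x+y)/2) + y - (x+y)/2 ≤ y * Real.log y :=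
      tangent_line y ((x+y)/2) (by linarith) hm
    have hlogdiv : Real.log ((x+y)/2) = Real.log (x+y) - Real.log 2 :=
      Real.log_div (ne_of_gt hspos) (by norm_num)
    have hT : 2*x*y*(L+w)/R ≤ (x+y)*(L+w)/2 := by
      rw [div_le_div_iff₀ hRpos (by norm_num)]
      have e1 : 4*(x*y)*(L+w) ≤ (x+y)^2*(L+w) := mul_le_mul_of_nonneg_right hxy4 hLw
      have e2 : ((x+y)*(L+w))*(x+y) ≤ ((x+y)*(L+w))*R :=
        mul_le_mul_of_nonneg_left hs (mul_nonneg (le_of_lt hspos) hLw)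
      nlinarith [e1, e2]
    have hinner : 0 ≤ Real.log (x+y) - Real.log 2 - 1 - L/2 := by
      have hl2 : Real.log 2 < 0.6931471808 := Real.log_two_lt_d9
      linarith
    have hmain : 0 ≤ (x+y) * (Real.log (x+y) - Real.log 2 - 1 - L/2) :=
      mul_nonneg (le_of_lt hspos) hinner
    nlinarith [ht1, ht2, hT, hmain, hlogdiv]

lemma key_ineq (r a b : ℕ) (w p : ℝ) (ha : 1 ≤ a) (hb : 1 ≤ b) (hab : a + b ≤ r)
    (hp : p = (Real.log r + w) / r) (hp1 : p ≤ 1)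
    (hw4 : 4 ≤ w) (hL11 : 11 ≤ Real.log r) (hwL : w ≤ Real.log r)
    (hL3 : (Real.log r)^3 ≤ r) :
    (r.choose a : ℝ) * (r.choose b) * (1 - p) ^ (a * (r - b) + b * (r - a))
      ≤ Real.exp (-((a:ℝ) + b) * w / 2) := by
  have har : a ≤ r := by omega
  have hbr : b ≤ r := by omega
  have hrpos : (0:ℝ) < r := by exact_mod_cast (by omega : 0 < r)
  have hxpos : (0:ℝ) < a := by exact_mod_cast (by omega : 0 < a)
  have hypos : (0:ℝ) < b := by exact_mod_cast (by omega : 0 < b)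
  have hx1 : (1:ℝ) ≤ a := by exact_mod_cast ha
  have hy1 : (1:ℝ) ≤ b := by exact_mod_cast hb
  have hsum : (a:ℝ) + b ≤ r := by exact_mod_cast hab
  set L := Real.log r with hLdef
  set N := a * (r - b) + b * (r - a) with hN
  -- cast of the exponent
  have hNcast : (N:ℝ) = (r:ℝ)*((a:ℝ)+(b:ℝ)) - 2*(a:ℝ)*(b:ℝ) := by
    rw [hN]
    push_cast [Nat.cast_sub hbr, Nat.cast_sub har]
    ring
  -- bound q^N
  have hq0 : (0:ℝ) ≤ 1 - p := by linarith
  have hqexp : (1 - p : ℝ) ≤ Real.exp (-p) := by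
    have := Real.add_one_le_exp (-p); linarith
  have hqN : (1 - p)^N ≤ Real.exp ((N:ℝ) * (-p)) := by
    calc (1 - p)^N ≤ Real.exp (-p) ^ N := pow_le_pow_left₀ hq0 hqexp N
      _ = Real.exp ((N:ℝ) * (-p)) := (Real.exp_nat_mul _ N).symm
  have hca := choose_le_exp r a ha har
  have hcb := choose_le_exp r b hb hbr
  have hchoosea0 : (0:ℝ) ≤ r.choose a := by positivity
  have hchooseb0 : (0:ℝ) ≤ r.choose b := by positivity
  calc (r.choose a : ℝ) * (r.choose b) * (1 - p) ^ N
      ≤ Real.exp ((a:ℝ) * (1 + L - Real.log a)) * Real.exp ((b:ℝ) * (1 + L - Real.log b))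
          * Real.exp ((N:ℝ) * (-p)) := by
        apply mul_le_mul
        · exact mul_le_mul hca hcb hchooseb0 (le_of_lt (Real.exp_pos _))
        · exact hqN
        · positivity
        · positivity
    _ = Real.exp ((a:ℝ) * (1 + L - Real.log a) + (b:ℝ) * (1 + L - Real.log b)
          + (N:ℝ) * (-p)) := by rw [← Real.exp_add, ← Real.exp_add]
    _ ≤ Real.exp (-((a:ℝ) + b) * w / 2) := by
        apply Real.exp_le_exp.2
        have hG := G_nonneg (a:ℝ) (b:ℝ) (r:ℝ) L w hx1 hy1 hsum hw4 hL11 hwL hL3 rfl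
        rw [hNcast, hp]
        have hexpand : ((r:ℝ)*((a:ℝ)+(b:ℝ)) - 2*(a:ℝ)*(b:ℝ)) * (-((L + w) / (r:ℝ)))
            = -(((a:ℝ)+(b:ℝ))*(L+w)) + 2*(a:ℝ)*(b:ℝ)*(L+w)/(r:ℝ) := by
          field_simp
          ring
        rw [hexpand]
        linarith [hG]

lemma sum_card_fun (r : ℕ) (f : ℕ → ℝ) :
    ∑ A ∈ (univ : Finset (Finset (Fin r))), f A.card
      = ∑ j ∈ range (r+1), (r.choose j : ℝ) * f j := by
  rw [← Finset.powerset_univ, Finset.sum_powerset, card_univ, Fintype.card_fin]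
  apply Finset.sum_congr rfl
  intro j _
  rw [Finset.sum_congr rfl (fun t ht => by rw [(Finset.mem_powersetCard.1 ht).2]),
    Finset.sum_const, card_powersetCard, card_univ, Fintype.card_fin, nsmul_eq_mul]

lemma sum_v_le (r : ℕ) (x : ℝ) (hx0 : 0 ≤ x) (hx12 : x ≤ 1/2) :
    ∑ j ∈ range (r+1), (if j = 0 then 0 else x^j) ≤ 2*x := by
  rw [Finset.sum_range_succ']
  have h0 : (if (0:ℕ) = 0 then (0:ℝ) else x^0) = 0 := by norm_num
  rw [h0, add_zero]
  have hcong : ∑ i ∈ range r, (if i+1 = 0 then (0:ℝ) else x^(i+1)) = ∑ i ∈ range r, x * x^i := by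
    apply Finset.sum_congr rfl
    intro i _
    rw [if_neg (Nat.succ_ne_zero i), pow_succ]
    ring
  rw [hcong, ← Finset.mul_sum]
  have hx1 : x < 1 := by linarith
  have hgeom : ∑ i ∈ range r, x^i ≤ 2 := by
    have hle : ∑ i ∈ range r, x^i ≤ ∑' i : ℕ, x^i :=
      Summable.sum_le_tsum _ (fun i _ => pow_nonneg hx0 i) (summable_geometric_of_lt_one hx0 hx1)
    rw [tsum_geometric_of_lt_one hx0 hx1] at hle
    have h2 : (0:ℝ) < 1 - x := by linarith
    have h3 : (1 - x)⁻¹ ≤ 2 := by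
      rw [inv_eq_one_div, div_le_iff₀ h2]; linarith
    linarith
  calc x * ∑ i ∈ range r, x^i ≤ x * 2 := mul_le_mul_of_nonneg_left hgeom hx0
    _ = 2*x := by ring

theorem stmt15 (w : ℕ → ℝ) (hw : Filter.Tendsto w Filter.atTop Filter.atTop)
    (hw' : Asymptotics.IsLittleO Filter.atTop w (fun r : ℕ => Real.log r))
    (p : ℕ → ℝ) (hp : ∀ r : ℕ, p r = (Real.log r + w r) / r)
    (hp0 : ∀ r : ℕ, 0 ≤ p r) (hp1 : ∀ r : ℕ, p r ≤ 1) :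
    Filter.Tendsto
      (fun r : ℕ => bipartiteRandomModel r (p r)
        {ω | ∃ c : (graphOf ω).ConnectedComponent,
          2 ≤ Nat.card c.supp ∧ Nat.card c.supp ≤ r})
      Filter.atTop (nhds 0) := by
  classical
  -- eventual hypotheses
  have hE1 : ∀ᶠ r : ℕ in Filter.atTop, 4 ≤ w r := hw.eventually_ge_atTop 4
  have hlogt : Filter.Tendsto (fun r : ℕ => Real.log r) Filter.atTop Filter.atTop :=
    Real.tendsto_log_atTop.comp tendsto_natCast_atTop_atTop
  have hE2 : ∀ᶠ r : ℕ in Filter.atTop, 11 ≤ Real.log r := hlogt.eventually_ge_atTop 11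
  have hE3 : ∀ᶠ r : ℕ in Filter.atTop, w r ≤ Real.log r := by
    filter_upwards [hw'.bound one_pos, hE2] with r h hl
    have h' : |w r| ≤ |Real.log r| := by simpa using h
    rw [abs_of_nonneg (by linarith : (0:ℝ) ≤ Real.log r)] at h'
    calc w r ≤ |w r| := le_abs_self _
      _ ≤ Real.log r := h'
  have hE4 : ∀ᶠ r : ℕ in Filter.atTop, (Real.log r)^3 ≤ (r:ℝ) := by
    have h0 := (Real.isLittleO_pow_log_id_atTop (n := 3)).bound one_pos
    filter_upwards [tendsto_natCast_atTop_atTop.eventually h0] with r h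
    have : |Real.log r ^ 3| ≤ 1 * |(r:ℝ)| := by simpa [id] using h
    calc (Real.log r)^3 ≤ |Real.log r ^ 3| := le_abs_self _
      _ ≤ 1 * |(r:ℝ)| := this
      _ = (r:ℝ) := by rw [one_mul, abs_of_nonneg (by positivity)]
  -- the eventual upper bound
  have hupper : ∀ᶠ r : ℕ in Filter.atTop,
      bipartiteRandomModel r (p r)
        {ω | ∃ c : (graphOf ω).ConnectedComponent,
          2 ≤ Nat.card c.supp ∧ Nat.card c.supp ≤ r}
      ≤ ENNReal.ofReal (4 * Real.exp (-(w r))) := by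
    filter_upwards [hE1, hE2, hE3, hE4] with r h1 h2 h3 h4
    have hq0 : (0:ℝ) ≤ 1 - p r := by linarith [hp1 r]
    set S : Finset (Finset (Fin r) × Finset (Fin r)) :=
      Finset.filter (fun AB : Finset (Fin r) × Finset (Fin r) =>
        AB.1.Nonempty ∧ AB.2.Nonempty ∧ AB.1.card + AB.2.card ≤ r) Finset.univ with hS
    set x : ℝ := Real.exp (-(w r)/2) with hxdef
    have hxpos : 0 < x := Real.exp_pos _
    have hx12 : x ≤ 1/2 := by
      have e1 : x ≤ Real.exp (-2) := Real.exp_le_exp.2 (by linarith)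
      have e2 : Real.exp (-2) = 1 / Real.exp 2 := by
        rw [Real.exp_neg]; exact inv_eq_one_div _
      have e3 : (3:ℝ) ≤ Real.exp 2 := by
        have := Real.add_one_le_exp (2:ℝ); linarith
      have e4 : 1 / Real.exp 2 ≤ 1/3 := by
        apply div_le_div_of_nonneg_left (by norm_num) (by norm_num) e3
      linarith
    -- the real sum bound
    have hreal : ∑ AB ∈ S, (1 - p r) ^ (AB.1.card * (r - AB.2.card) + AB.2.card * (r - AB.1.card))
        ≤ 4 * Real.exp (-(w r)) := by
      set u : ℕ → ℕ → ℝ := fun a b => if a = 0 ∨ b = 0 then 0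
        else Real.exp (-((a:ℝ)+b) * w r / 2) / ((r.choose a : ℝ) * (r.choose b)) with hu
      have hstepA : ∀ AB ∈ S,
          (1 - p r) ^ (AB.1.card * (r - AB.2.card) + AB.2.card * (r - AB.1.card))
          ≤ u AB.1.card AB.2.card := by
        intro AB hAB
        rw [hS, Finset.mem_filter] at hAB
        obtain ⟨-, hne1, hne2, hcardle⟩ := hAB
        have ha : 1 ≤ AB.1.card := hne1.card_pos
        have hb : 1 ≤ AB.2.card := hne2.card_pos
        have hCC : (0:ℝ) < (r.choose AB.1.card : ℝ) * (r.choose AB.2.card) := by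
          have := Nat.choose_pos (le_trans (by omega) hcardle : AB.1.card ≤ r)
          have := Nat.choose_pos (le_trans (by omega) hcardle : AB.2.card ≤ r)
          positivity
        simp only [hu]
        rw [if_neg (by omega : ¬(AB.1.card = 0 ∨ AB.2.card = 0))]
        rw [le_div_iff₀ hCC]
        calc (1 - p r) ^ (AB.1.card * (r - AB.2.card) + AB.2.card * (r - AB.1.card))
              * ((r.choose AB.1.card : ℝ) * (r.choose AB.2.card))
            = (r.choose AB.1.card : ℝ) * (r.choose AB.2.card)
              * (1 - p r) ^ (AB.1.card * (r - AB.2.card) + AB.2.card * (r - AB.1.card)) := by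
              ring
          _ ≤ Real.exp (-((AB.1.card:ℝ) + AB.2.card) * w r / 2) :=
              key_ineq r AB.1.card AB.2.card (w r) (p r) ha hb hcardle (hp r) (hp1 r) h1 h2 h3 h4
      have hstepB : ∑ AB ∈ S, (1 - p r) ^ (AB.1.card * (r - AB.2.card) + AB.2.card * (r - AB.1.card))
          ≤ ∑ AB ∈ S, u AB.1.card AB.2.card := Finset.sum_le_sum hstepA
      have hunonneg : ∀ a b : ℕ, 0 ≤ u a b := by
        intro a b
        simp only [hu]
        split_ifs
        · exact le_refl 0
        · positivity
      have hstepB2 : ∑ AB ∈ S, u AB.1.card AB.2.card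
          ≤ ∑ AB ∈ (univ : Finset (Finset (Fin r) × Finset (Fin r))), u AB.1.card AB.2.card :=
        Finset.sum_le_sum_of_subset_of_nonneg (Finset.subset_univ S)
          (fun AB _ _ => hunonneg _ _)
      -- evaluate the full sum
      set v : ℕ → ℝ := fun j => if j = 0 then 0 else x^j with hv
      have hvnonneg : ∀ j, 0 ≤ v j := by
        intro j; simp only [hv]; split_ifs; exacts [le_refl 0, by positivity]
      have hstepC : ∑ AB ∈ (univ : Finset (Finset (Fin r) × Finset (Fin r))),
          u AB.1.card AB.2.card
          = (∑ j ∈ range (r+1), v j) * (∑ j ∈ range (r+1), v j) := by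
        rw [← Finset.univ_product_univ, Finset.sum_product]
        have hinner : ∀ A : Finset (Fin r),
            ∑ B ∈ (univ : Finset (Finset (Fin r))), u A.card B.card
            = ∑ b ∈ range (r+1), (r.choose b : ℝ) * u A.card b :=
          fun A => sum_card_fun r (fun b => u A.card b)
        calc ∑ A ∈ (univ : Finset (Finset (Fin r))),
              ∑ B ∈ (univ : Finset (Finset (Fin r))), u A.card B.card
            = ∑ A ∈ (univ : Finset (Finset (Fin r))),
              (fun a => ∑ b ∈ range (r+1), (r.choose b : ℝ) * u a b) A.card := by
              exact Finset.sum_congr rfl (fun A _ => hinner A)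
          _ = ∑ a ∈ range (r+1), (r.choose a : ℝ)
                * ∑ b ∈ range (r+1), (r.choose b : ℝ) * u a b :=
              sum_card_fun r (fun a => ∑ b ∈ range (r+1), (r.choose b : ℝ) * u a b)
          _ = ∑ a ∈ range (r+1), ∑ b ∈ range (r+1), (r.choose a : ℝ) * ((r.choose b : ℝ) * u a b) := by
              exact Finset.sum_congr rfl (fun a _ => by rw [Finset.mul_sum])
          _ = ∑ a ∈ range (r+1), ∑ b ∈ range (r+1), v a * v b := by
              apply Finset.sum_congr rfl
              intro a ha
              apply Finset.sum_congr rfl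
              intro b hb
              rw [Finset.mem_range] at ha hb
              have har : a ≤ r := by omega
              have hbr : b ≤ r := by omega
              simp only [hu, hv]
              by_cases h0 : a = 0 ∨ b = 0
              · rw [if_pos h0]
                rcases h0 with h0 | h0 <;> subst h0 <;> simp
              · push_neg at h0
                rw [if_neg (by tauto), if_neg h0.1, if_neg h0.2]
                have hca : ((r.choose a : ℝ)) ≠ 0 := by
                  have := Nat.choose_pos har; positivity
                have hcb : ((r.choose b : ℝ)) ≠ 0 := by
                  have := Nat.choose_pos hbr; positivity
                have hxx : x^a * x^b = Real.exp (-((a:ℝ)+b) * w r / 2) := by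
                  rw [hxdef, ← Real.exp_nat_mul, ← Real.exp_nat_mul, ← Real.exp_add]
                  congr 1
                  ring
                rw [← hxx]
                field_simp
          _ = (∑ j ∈ range (r+1), v j) * (∑ j ∈ range (r+1), v j) := by
              rw [Finset.sum_mul_sum]
      have hvsum : ∑ j ∈ range (r+1), v j ≤ 2*x := sum_v_le r x (le_of_lt hxpos) hx12
      have hvsum0 : 0 ≤ ∑ j ∈ range (r+1), v j := Finset.sum_nonneg (fun j _ => hvnonneg j)
      have hfinal : (∑ j ∈ range (r+1), v j) * (∑ j ∈ range (r+1), v j) ≤ 4 * Real.exp (-(w r)) := by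
        have hxx : x * x = Real.exp (-(w r)) := by
          rw [hxdef, ← Real.exp_add]; congr 1; ring
        calc (∑ j ∈ range (r+1), v j) * (∑ j ∈ range (r+1), v j)
            ≤ (2*x) * (2*x) := mul_le_mul hvsum hvsum hvsum0 (by positivity)
          _ = 4 * (x * x) := by ring
          _ = 4 * Real.exp (-(w r)) := by rw [hxx]
      linarith [hstepB, hstepB2, hstepC ▸ hfinal]
    -- ENNReal chain
    calc bipartiteRandomModel r (p r)
          {ω | ∃ c : (graphOf ω).ConnectedComponent,
            2 ≤ Nat.card c.supp ∧ Nat.card c.supp ≤ r}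
        ≤ bipartiteRandomModel r (p r)
            (⋃ AB ∈ S, {ω : Fin r × Fin r → Bool | ∀ k : Fin r × Fin r,
              ((k.1 ∈ AB.1 ∧ k.2 ∉ AB.2) ∨ (k.1 ∉ AB.1 ∧ k.2 ∈ AB.2)) → ω k = false}) :=
          measure_mono (event_subset r)
      _ ≤ ∑ AB ∈ S, bipartiteRandomModel r (p r)
            {ω : Fin r × Fin r → Bool | ∀ k : Fin r × Fin r,
              ((k.1 ∈ AB.1 ∧ k.2 ∉ AB.2) ∨ (k.1 ∉ AB.1 ∧ k.2 ∈ AB.2)) → ω k = false} :=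
          measure_biUnion_finset_le S _
      _ = ∑ AB ∈ S, ENNReal.ofReal ((1 - p r) ^ (AB.1.card * (r - AB.2.card)
            + AB.2.card * (r - AB.1.card))) := by
          apply Finset.sum_congr rfl
          intro AB _
          rw [iso_measure r (p r) (hp0 r) (hp1 r) AB.1 AB.2, ← ENNReal.ofReal_pow hq0]
      _ = ENNReal.ofReal (∑ AB ∈ S, (1 - p r) ^ (AB.1.card * (r - AB.2.card)
            + AB.2.card * (r - AB.1.card))) :=
          (ENNReal.ofReal_sum_of_nonneg (fun AB _ => pow_nonneg hq0 _)).symm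
      _ ≤ ENNReal.ofReal (4 * Real.exp (-(w r))) := ENNReal.ofReal_le_ofReal hreal
  -- squeeze
  have htarget : Filter.Tendsto (fun r : ℕ => ENNReal.ofReal (4 * Real.exp (-(w r))))
      Filter.atTop (nhds 0) := by
    have h0 : Filter.Tendsto (fun r : ℕ => 4 * Real.exp (-(w r))) Filter.atTop (nhds 0) := by
      have hneg : Filter.Tendsto (fun r : ℕ => -(w r)) Filter.atTop Filter.atBot :=
        Filter.Tendsto.comp Filter.tendsto_neg_atTop_atBot hw
      have hexp : Filter.Tendsto (fun r : ℕ => Real.exp (-(w r))) Filter.atTop (nhds 0) :=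
        Real.tendsto_exp_atBot.comp hneg
      have := hexp.const_mul (4:ℝ)
      simpa using this
    have := ENNReal.tendsto_ofReal h0
    simpa using this
  exact tendsto_of_tendsto_of_tendsto_of_le_of_le' tendsto_const_nhds htarget
    (Filter.Eventually.of_forall (fun r => zero_le)) hupper
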